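/- Let s : ℝ^{N×N} → ℝ^{N×N} be continuous, permutation equivariant, and a conservative vector field (i.e., s = ∇f for some differentiable f : ℝ^{N×N} → ℝ). Then the function g(A) = ∫_0^1 ⟨s(tA), A⟩_F dt is permutation invariant, and f(A) - f(0) = g(A) for all A; in particular f(A^[π]) = f(A) for all A and all permutations π. -/

import Mathlib

attribute [local instance] Matrix.frobeniusNormedAddCommGroup Matrix.frobeniusNormedSpace

/-!
Since `s = ∇f`, the derivative of `t ↦ f (t • A)` is `⟨s (t • A), A⟩_F`, so the fundamental
theorem of calculus gives `f A - f 0 = g A`. Equivariance of `s` turns the integrand of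
`g (A^[π])` into `⟨(s (t • A))^[π], A^[π]⟩_F = ⟨s (t • A), A⟩_F`, so `g` is invariant, and
hence so is `f`.
-/

open Matrix

theorem Matrix.linearMap_apply_eq_sum_sum_single {R m n F : Type*} [CommSemiring R]
    [Fintype m] [Fintype n] [DecidableEq m] [DecidableEq n] [FunLike F (Matrix m n R) R]
    [LinearMapClass F R (Matrix m n R) R] (L : F) (A : Matrix m n R) :
    L A = ∑ i, ∑ j, L (single i j 1) * A i j := by
  conv_lhs => rw [matrix_eq_sum_single A]
  simp only [map_sum]
  refine Finset.sum_congr rfl fun i _ => Finset.sum_congr rfl fun j _ => ?_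
  rw [mul_comm, ← smul_eq_mul, ← map_smul, smul_single, smul_eq_mul, mul_one]

theorem Matrix.sum_sum_submatrix_mul_submatrix {R l m n o : Type*} [AddCommMonoid R] [Mul R]
    [Fintype l] [Fintype m] [Fintype n] [Fintype o] (X A : Matrix m n R) (e₁ : l ≃ m)
    (e₂ : o ≃ n) :
    ∑ i, ∑ j, X.submatrix e₁ e₂ i j * A.submatrix e₁ e₂ i j = ∑ i, ∑ j, X i j * A i j := by
  simp only [submatrix_apply]
  rw [← e₁.sum_comp]
  exact Finset.sum_congr rfl fun i _ => e₂.sum_comp fun j => X (e₁ i) j * A (e₁ i) j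

theorem sub_eq_integral_fderiv_smul {E F : Type*} [NormedAddCommGroup E] [NormedSpace ℝ E]
    [NormedAddCommGroup F] [NormedSpace ℝ F] [CompleteSpace F] {f : E → F}
    (hf : Differentiable ℝ f) (a : E)
    (hint : IntervalIntegrable (fun t : ℝ => fderiv ℝ f (t • a) a) MeasureTheory.volume 0 1) :
    f a - f 0 = ∫ t in (0 : ℝ)..1, fderiv ℝ f (t • a) a := by
  have hderiv : ∀ t ∈ Set.uIcc (0 : ℝ) 1,
      HasDerivAt (fun t : ℝ => f (t • a)) (fderiv ℝ f (t • a) a) t := fun t _ =>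
    (hf (t • a)).hasFDerivAt.comp_hasDerivAt t
      (((hasDerivAt_id t).smul_const a).congr_deriv (one_smul ℝ a))
  simpa using (intervalIntegral.integral_eq_sub_of_hasDerivAt hderiv hint).symm

/-- If `s` is continuous, permutation equivariant and conservative (s = ∇f),
then the line integral `g(A) = ∫_0^1 ⟨s(tA), A⟩_F dt` is permutation
invariant, equals `f(A) - f(0)`, and hence `f` is permutation invariant. -/
theorem line_integral_of_equivariant_conservative_field {N : ℕ}
    (s : Matrix (Fin N) (Fin N) ℝ → Matrix (Fin N) (Fin N) ℝ)
    (f : Matrix (Fin N) (Fin N) ℝ → ℝ)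
    (hs_cont : Continuous s)
    (hequiv : ∀ (A : Matrix (Fin N) (Fin N) ℝ) (π : Equiv.Perm (Fin N)),
      s (Matrix.of fun i j => A (π i) (π j)) = Matrix.of fun i j => s A (π i) (π j))
    (hf : Differentiable ℝ f)
    (hgrad : ∀ (A : Matrix (Fin N) (Fin N) ℝ) (i j : Fin N),
      s A i j = fderiv ℝ f A (Matrix.single i j 1))
    (g : Matrix (Fin N) (Fin N) ℝ → ℝ)
    (hg : ∀ A : Matrix (Fin N) (Fin N) ℝ,
      g A = ∫ t in (0:ℝ)..1, ∑ i : Fin N, ∑ j : Fin N, s (t • A) i j * A i j) :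
    (∀ (A : Matrix (Fin N) (Fin N) ℝ) (π : Equiv.Perm (Fin N)),
        g (Matrix.of fun i j => A (π i) (π j)) = g A) ∧
    (∀ A : Matrix (Fin N) (Fin N) ℝ, f A - f 0 = g A) ∧
    (∀ (A : Matrix (Fin N) (Fin N) ℝ) (π : Equiv.Perm (Fin N)),
        f (Matrix.of fun i j => A (π i) (π j)) = f A) := by
  have hfderiv (X A : Matrix (Fin N) (Fin N) ℝ) :
      fderiv ℝ f X A = ∑ i, ∑ j, s X i j * A i j := by
    simp only [hgrad, ← linearMap_apply_eq_sum_sum_single]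
  have hg_inv (A : Matrix (Fin N) (Fin N) ℝ) (π : Equiv.Perm (Fin N)) :
      g (A.submatrix π π) = g A := by
    have hsmul (t : ℝ) : t • A.submatrix π π = (t • A).submatrix π π := rfl
    have hs (t : ℝ) : s ((t • A).submatrix π π) = (s (t • A)).submatrix π π := hequiv (t • A) π
    simp_rw [hg, hsmul, hs, sum_sum_submatrix_mul_submatrix]
  have hfg (A : Matrix (Fin N) (Fin N) ℝ) : f A - f 0 = g A := by
    have hcont : Continuous fun t : ℝ => fderiv ℝ f (t • A) A := by
      simp_rw [hfderiv]
      fun_prop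
    rw [hg, sub_eq_integral_fderiv_smul hf A (hcont.intervalIntegrable 0 1)]
    exact intervalIntegral.integral_congr fun t _ => hfderiv (t • A) A
  refine ⟨hg_inv, hfg, fun A π => ?_⟩
  have h := hfg (A.submatrix π π)
  rw [hg_inv, ← hfg] at h
  exact sub_left_injective h
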